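/- Let r ≥ 2 be an integer, suppose 0 ≤ a₁ ≤ a₂ ≤ … ≤ a_r ≤ 1 are real numbers with Σ_{i=1}^r aᵢ ≥ r − 1, and suppose 0 ≤ bᵢ ≤ aᵢ for each 1 ≤ i ≤ r, with α := Σ_{i=1}^r (aᵢ − bᵢ) ≤ 1/4. Then ∏_{i=2}^r bᵢ ≥ (1 − 2α)·((r−1)/r)^{r−1}. -/

import Mathlib

/-!
Write `aᵢ = 1 - dᵢ`. For `i ≥ 2` the deficits satisfy `0 ≤ dᵢ ≤ d₁ =: t` and
`Σ_{i ≥ 2} dᵢ ≤ 1 - t`. Concavity of `log` gives `log (1 - d) ≥ (d / t) log (1 - t)` on `[0, t]`,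
so `Σ_{i ≥ 2} log aᵢ ≥ m log (1 - t)` where
`m = Σ_{i ≥ 2} dᵢ / t ≤ min (r - 1) ((1 - t) / t)`. If `t ≤ 1 / r` this is
at least `(r - 1) log ((r - 1) / r)` because `log (1 - t) ≥ log ((r - 1) / r)`; otherwise because
`(1 - t) log (1 - t) / t` is increasing in `t`.
For the perturbation, `aᵢ ≥ 1/2` when `i ≥ 2`, so `bᵢ / aᵢ = 1 - (aᵢ - bᵢ) / aᵢ` with
`(aᵢ - bᵢ) / aᵢ ≤ 2 (aᵢ - bᵢ)`, and the Weierstrass product inequality gives the factor `1 - 2α`.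
-/

open Finset Real

theorem one_sub_sum_le_prod_one_sub {ι : Type*} (s : Finset ι) {x : ι → ℝ}
    (h0 : ∀ i ∈ s, 0 ≤ x i) (h1 : ∀ i ∈ s, x i ≤ 1) :
    1 - ∑ i ∈ s, x i ≤ ∏ i ∈ s, (1 - x i) := by
  induction s using Finset.cons_induction with
  | empty => simp
  | cons j s hj ih =>
    simp only [mem_cons, forall_eq_or_imp] at h0 h1
    rw [sum_cons, prod_cons]
    have hs : 0 ≤ ∑ i ∈ s, x i := sum_nonneg h0.2
    nlinarith [mul_le_mul_of_nonneg_left (ih h0.2 h1.2) (sub_nonneg.2 h1.1)]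

theorem one_sub_two_mul_sum_le_prod_div {ι : Type*} {s : Finset ι} {a b : ι → ℝ}
    (ha : ∀ i ∈ s, 1 / 2 ≤ a i) (hb0 : ∀ i ∈ s, 0 ≤ b i) (hba : ∀ i ∈ s, b i ≤ a i) :
    1 - 2 * ∑ i ∈ s, (a i - b i) ≤ ∏ i ∈ s, b i / a i := by
  have ha0 : ∀ i ∈ s, 0 < a i := fun i hi => by linarith [ha i hi]
  have hratio : ∀ i ∈ s, b i / a i = 1 - (a i - b i) / a i := fun i hi => by
    field_simp [(ha0 i hi).ne']; ring
  have hdefect : ∀ i ∈ s, (a i - b i) / a i ≤ 2 * (a i - b i) := fun i hi => by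
    rw [div_le_iff₀ (ha0 i hi)]; nlinarith [ha i hi, hba i hi]
  rw [prod_congr rfl hratio, mul_sum]
  refine le_trans ?_ (one_sub_sum_le_prod_one_sub s (fun i hi => ?_) fun i hi => ?_)
  · linarith [sum_le_sum hdefect]
  · exact div_nonneg (sub_nonneg.2 (hba i hi)) (ha0 i hi).le
  · rw [div_le_one (ha0 i hi)]; linarith [hb0 i hi]

theorem div_mul_log_one_sub_le_log_one_sub {c t : ℝ} (hc : 0 ≤ c) (hct : c ≤ t) (ht0 : 0 < t)
    (ht1 : t < 1) : c / t * log (1 - t) ≤ log (1 - c) := by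
  have hw : c / t ≤ 1 := div_le_one_of_le₀ hct ht0.le
  have h := strictConcaveOn_log_Ioi.concaveOn.2 (Set.mem_Ioi.2 one_pos)
    (Set.mem_Ioi.2 (sub_pos.2 ht1)) (sub_nonneg.2 hw) (div_nonneg hc ht0.le) (sub_add_cancel _ _)
  have hcomb : (1 - c / t) • (1 : ℝ) + (c / t) • (1 - t) = 1 - c := by
    simp only [smul_eq_mul]; field_simp; ring
  rwa [hcomb, smul_eq_mul, smul_eq_mul, log_one, mul_zero, zero_add] at h

theorem one_sub_mul_log_one_sub_div_le {u t : ℝ} (hu : 0 < u) (hut : u ≤ t) (ht : t ≤ 1) :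
    (1 - u) * log (1 - u) / u ≤ (1 - t) * log (1 - t) / t := by
  -- `(1 - x) log (1 - x) / x` is minus the slope of the convex `y log y` between `1 - x` and `1`
  have h := convexOn_mul_log.secant_mono (a := 1) (x := 1 - t) (y := 1 - u)
    (Set.mem_Ici.2 zero_le_one) (Set.mem_Ici.2 (by linarith)) (Set.mem_Ici.2 (by linarith))
    (by linarith) (by linarith) (by linarith)
  simp only [log_one, mul_zero, sub_zero, sub_sub_cancel_left, div_neg] at h
  linarith

theorem mul_log_div_add_one_le {n m t : ℝ} (hn : 0 < n) (ht0 : 0 < t) (ht1 : t ≤ 1)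
    (hm : m ≤ n) (hmt : m * t ≤ 1 - t) : n * log (n / (n + 1)) ≤ m * log (1 - t) := by
  have hlog : log (1 - t) ≤ 0 := log_nonpos (by linarith) (by linarith)
  have hsucc : n / (n + 1) = 1 - 1 / (n + 1) := by field_simp; ring
  rcases le_or_gt t (1 / (n + 1)) with hsmall | hlarge
  · calc n * log (n / (n + 1)) ≤ n * log (1 - t) := by
          gcongr
          linarith
      _ ≤ m * log (1 - t) := mul_le_mul_of_nonpos_right hm hlog
  · have hmt' : m ≤ (1 - t) / t := by rwa [le_div_iff₀ ht0]
    calc n * log (n / (n + 1))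
        = (1 - 1 / (n + 1)) * log (1 - 1 / (n + 1)) / (1 / (n + 1)) := by
          rw [← hsucc]; field_simp
      _ ≤ (1 - t) * log (1 - t) / t :=
          one_sub_mul_log_one_sub_div_le (by positivity) hlarge.le ht1
      _ = (1 - t) / t * log (1 - t) := by ring
      _ ≤ m * log (1 - t) := mul_le_mul_of_nonpos_right hmt' hlog

theorem pow_card_div_le_prod_one_sub {ι : Type*} (s : Finset ι) {d : ι → ℝ} {t : ℝ}
    (hd0 : ∀ i ∈ s, 0 ≤ d i) (hdt : ∀ i ∈ s, d i ≤ t) (hsum : ∑ i ∈ s, d i ≤ 1 - t) :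
    ((#s : ℝ) / (#s + 1)) ^ #s ≤ ∏ i ∈ s, (1 - d i) := by
  have hbase : (0 : ℝ) ≤ #s / (#s + 1) := by positivity
  by_cases hzero : ∀ i ∈ s, d i = 0
  · rw [prod_eq_one fun i hi => by rw [hzero i hi, sub_zero]]
    exact pow_le_one₀ hbase (div_le_one_of_le₀ (by linarith) (by positivity))
  push Not at hzero
  obtain ⟨j, hj, hdj⟩ := hzero
  have hdj_pos : 0 < d j := lt_of_le_of_ne (hd0 j hj) hdj.symm
  have ht0 : 0 < t := hdj_pos.trans_le (hdt j hj)
  have ht1 : t < 1 := by linarith [single_le_sum hd0 hj]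
  have hn : (0 : ℝ) < #s := by exact_mod_cast card_pos.2 ⟨j, hj⟩
  have hfactor : ∀ i ∈ s, 0 < 1 - d i := fun i hi => by linarith [hdt i hi]
  rw [← log_le_log_iff (by positivity) (prod_pos hfactor), log_pow, log_prod fun i hi =>
    (hfactor i hi).ne']
  calc (#s : ℝ) * log (#s / (#s + 1))
      ≤ (∑ i ∈ s, d i) / t * log (1 - t) := by
        refine mul_log_div_add_one_le hn ht0 ht1.le ?_ ?_
        · rw [div_le_iff₀ ht0]
          simpa using sum_le_card_nsmul s d t hdt
        · rwa [div_mul_cancel₀ _ ht0.ne']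
    _ = ∑ i ∈ s, d i / t * log (1 - t) := by rw [sum_div, sum_mul]
    _ ≤ ∑ i ∈ s, log (1 - d i) := sum_le_sum fun i hi =>
        div_mul_log_one_sub_le_log_one_sub (hd0 i hi) (hdt i hi) ht0 ht1

theorem sum_Icc_two_one_sub_le {r : ℕ} (hr : 1 ≤ r) {a : ℕ → ℝ}
    (hsum : (r : ℝ) - 1 ≤ ∑ i ∈ Icc 1 r, a i) : ∑ i ∈ Icc 2 r, (1 - a i) ≤ a 1 := by
  rw [Icc_eq_cons_Ioc hr, sum_cons, ← Icc_add_one_left_eq_Ioc, one_add_one_eq_two] at hsum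
  rw [sum_sub_distrib, sum_const, Nat.card_Icc, nsmul_eq_mul, mul_one,
    Nat.cast_sub (by omega)]
  push_cast
  linarith

theorem product_lower_bound_perturbed_general (r : ℕ) (hr : 2 ≤ r) (a b : ℕ → ℝ)
    (h1 : a r ≤ 1)
    (hmono : ∀ i ∈ Finset.Icc 1 r, ∀ j ∈ Finset.Icc 1 r, i ≤ j → a i ≤ a j)
    (hsum : (r : ℝ) - 1 ≤ ∑ i ∈ Finset.Icc 1 r, a i)
    (hb0 : ∀ i ∈ Finset.Icc 1 r, 0 ≤ b i)
    (hba : ∀ i ∈ Finset.Icc 1 r, b i ≤ a i) :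
    (1 - 2 * ∑ i ∈ Finset.Icc 1 r, (a i - b i)) * (((r : ℝ) - 1) / r) ^ (r - 1) ≤
      ∏ i ∈ Finset.Icc 2 r, b i := by
  have hsub : Icc 2 r ⊆ Icc 1 r := Icc_subset_Icc_left one_le_two
  have ha1 : ∀ i ∈ Icc 2 r, a 1 ≤ a i := fun i hi =>
    hmono 1 (by simp; omega) i (hsub hi) (by simp at hi; omega)
  have hle1 : ∀ i ∈ Icc 2 r, a i ≤ 1 := fun i hi =>
    (hmono i (hsub hi) r (by simp; omega) (mem_Icc.1 hi).2).trans h1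
  have hdeficit := sum_Icc_two_one_sub_le (by omega) hsum
  -- each `1 - aᵢ` is at most the total deficit, hence at most `a₁ ≤ aᵢ`
  have hhalf : ∀ i ∈ Icc 2 r, 1 / 2 ≤ a i := fun i hi => by
    linarith [ha1 i hi, single_le_sum (fun j hj => sub_nonneg.2 (hle1 j hj)) hi]
  have hunperturbed : (((r : ℝ) - 1) / r) ^ (r - 1) ≤ ∏ i ∈ Icc 2 r, a i := by
    have h := pow_card_div_le_prod_one_sub (Icc 2 r) (d := fun i => 1 - a i) (t := 1 - a 1)
      (fun i hi => sub_nonneg.2 (hle1 i hi)) (fun i hi => by linarith [ha1 i hi])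
      (by simpa using hdeficit)
    simpa [Nat.card_Icc, Nat.cast_sub (by omega : 1 ≤ r)] using h
  have hratio := one_sub_two_mul_sum_le_prod_div hhalf (fun i hi => hb0 i (hsub hi))
    fun i hi => hba i (hsub hi)
  have htail : ∑ i ∈ Icc 2 r, (a i - b i) ≤ ∑ i ∈ Icc 1 r, (a i - b i) :=
    sum_le_sum_of_subset_of_nonneg hsub fun i hi _ => sub_nonneg.2 (hba i hi)
  calc (1 - 2 * ∑ i ∈ Icc 1 r, (a i - b i)) * (((r : ℝ) - 1) / r) ^ (r - 1)
      ≤ (∏ i ∈ Icc 2 r, b i / a i) * ∏ i ∈ Icc 2 r, a i :=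
        mul_le_mul (by linarith) hunperturbed
          (pow_nonneg (div_nonneg (sub_nonneg.2 (mod_cast (by omega : 1 ≤ r))) r.cast_nonneg) _)
          (prod_nonneg fun i hi => div_nonneg (hb0 i (hsub hi)) (by linarith [hhalf i hi]))
    _ = ∏ i ∈ Icc 2 r, b i := by
        rw [← prod_mul_distrib]
        exact prod_congr rfl fun i hi => div_mul_cancel₀ _ (by linarith [hhalf i hi])

/-- If `0 ≤ a₁ ≤ … ≤ a_r ≤ 1` with `Σᵢ aᵢ ≥ r - 1`, and `0 ≤ bᵢ ≤ aᵢ` with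
`α = Σᵢ (aᵢ - bᵢ) ≤ 1/4`, then `∏_{i=2}^r bᵢ ≥ (1 - 2α) ((r-1)/r)^(r-1)`. -/
theorem product_lower_bound_perturbed (r : ℕ) (hr : 2 ≤ r) (a b : ℕ → ℝ)
    (h0 : 0 ≤ a 1) (h1 : a r ≤ 1)
    (hmono : ∀ i ∈ Finset.Icc 1 r, ∀ j ∈ Finset.Icc 1 r, i ≤ j → a i ≤ a j)
    (hsum : (r : ℝ) - 1 ≤ ∑ i ∈ Finset.Icc 1 r, a i)
    (hb0 : ∀ i ∈ Finset.Icc 1 r, 0 ≤ b i)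
    (hba : ∀ i ∈ Finset.Icc 1 r, b i ≤ a i)
    (hα : ∑ i ∈ Finset.Icc 1 r, (a i - b i) ≤ 1 / 4) :
    (1 - 2 * ∑ i ∈ Finset.Icc 1 r, (a i - b i)) * (((r : ℝ) - 1) / r) ^ (r - 1) ≤
      ∏ i ∈ Finset.Icc 2 r, b i :=
  product_lower_bound_perturbed_general r hr a b h1 hmono hsum hb0 hba
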